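/- Let K be a separably closed field of characteristic different from 2, equipped with a (real additive) valuation ν : K → ℝ ∪ {∞} with ν(2) > 0 (residue characteristic 2), and suppose K is complete with respect to the induced metric d(x,y) = 2^{−ν(x−y)}. Then there is no ring automorphism σ of K with σ ∘ σ = id, σ ≠ id, and ν(σ(x)) = ν(x) for all x ∈ K. -/
import Mathlib


/-- The ultrametric `d(x,y) = 2^{-ν(x-y)}` induced by a valuation `ν` (with `2^{-∞} = 0`). -/
noncomputable def dVal {K : Type*} [Field K] (ν : K → WithTop ℝ) (x y : K) : ℝ :=
  WithTop.recTopCoe 0 (fun r : ℝ => (2 : ℝ) ^ (-r)) (ν (x - y))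

/-- Let `K` be a separably closed field of characteristic different
from 2, equipped with a valuation `ν` with `ν 2 > 0` (residue characteristic 2), such that
`K` is complete with respect to the induced metric `d(x,y) = 2^{-ν(x-y)}`. Then there is no
nontrivial valuation-preserving ring involution of `K`. -/
theorem no_involution_sepClosed {K : Type*} [Field K] [IsSepClosed K]
    (hchar : ringChar K ≠ 2)
    (ν : K → WithTop ℝ)
    (hν1 : ∀ x : K, ν x = ⊤ ↔ x = 0)
    (hνmul : ∀ x y : K, ν (x * y) = ν x + ν y)
    (hνadd : ∀ x y : K, min (ν x) (ν y) ≤ ν (x + y))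
    (hν2 : 0 < ν (2 : K))
    (hcomplete : ∀ u : ℕ → K,
      (∀ ε : ℝ, 0 < ε → ∃ N : ℕ, ∀ p ≥ N, ∀ q ≥ N, dVal ν (u p) (u q) < ε) →
      ∃ x : K, ∀ ε : ℝ, 0 < ε → ∃ N : ℕ, ∀ n ≥ N, dVal ν (u n) x < ε) :
    ¬ ∃ σ : K ≃+* K, (∀ x : K, σ (σ x) = x) ∧ σ ≠ RingEquiv.refl K ∧
        ∀ x : K, ν (σ x) = ν x := by
  rintro ⟨σ, hinv, hne, hiso⟩
  -- there is an element moved by σ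
  obtain ⟨t, ht⟩ : ∃ t : K, σ t ≠ t := by
    by_contra h
    push_neg at h
    exact hne (RingEquiv.ext h)
  have two0 : (2 : K) ≠ 0 := Ring.two_ne_zero hchar
  -- every element has a square root
  have sqrt : ∀ a : K, ∃ z : K, z ^ 2 = a := by
    intro a
    haveI : NeZero ((2 : ℕ) : K) := ⟨by push_cast; exact two0⟩
    exact IsSepClosed.exists_pow_nat_eq a 2
  -- Claim X : no σ-fixed square root of -1
  have hX : ∀ h : K, σ h = h → h ^ 2 ≠ -1 := by
    intro h hfix hsq
    obtain ⟨z, hz⟩ := sqrt (t - σ t)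
    have hz0 : z ≠ 0 := by
      intro h0
      rw [h0] at hz
      have : t - σ t = 0 := by rw [← hz]; ring
      exact ht (sub_eq_zero.mp this).symm
    have hσz2 : (σ z) ^ 2 = -(z ^ 2) := by
      have h1 : (σ z) ^ 2 = σ t - t := by rw [← map_pow, hz, map_sub, hinv]
      rw [h1, hz]; ring
    have hfac : (σ z - h * z) * (σ z + h * z) = 0 := by
      have h2 : (h * z) ^ 2 = -(z ^ 2) := by rw [mul_pow, hsq]; ring
      linear_combination hσz2 - h2
    have hz2 : (2 : K) * z ≠ 0 := mul_ne_zero two0 hz0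
    rcases mul_eq_zero.mp hfac with h1 | h1
    · have hσz : σ z = h * z := sub_eq_zero.mp h1
      have h3 : z = h ^ 2 * z := by
        conv_lhs => rw [← hinv z, hσz]
        rw [map_mul, hfix, hσz]; ring
      have hzz : z = -z := by linear_combination h3 + z * hsq
      exact hz2 (by linear_combination hzz)
    · have hσz : σ z = -(h * z) := by linear_combination h1
      have h3 : z = h ^ 2 * z := by
        conv_lhs => rw [← hinv z, hσz]
        rw [map_neg, map_mul, hfix, hσz]; ring
      have hzz : z = -z := by linear_combination h3 + z * hsq
      exact hz2 (by linear_combination hzz)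
  -- a square root of -1
  obtain ⟨i, hi⟩ := sqrt (-1)
  have hσi : σ i = -i := by
    have h2 : (σ i - i) * (σ i + i) = 0 := by
      have : (σ i) ^ 2 = i ^ 2 := by rw [← map_pow, hi, map_neg, map_one]
      linear_combination this
    rcases mul_eq_zero.mp h2 with h1 | h1
    · exact absurd hi (hX i (sub_eq_zero.mp h1))
    · linear_combination h1
  -- step : fixed squares can be incremented
  have step : ∀ g : K, σ g = g → ∃ g' : K, σ g' = g' ∧ g' ^ 2 = g ^ 2 + 1 := by
    intro g hg
    obtain ⟨s, hs⟩ := sqrt (g + i)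
    refine ⟨s * σ s, ?_, ?_⟩
    · rw [map_mul, hinv, mul_comm]
    · have h1 : (s * σ s) ^ 2 = (g + i) * (g - i) := by
        rw [mul_pow, hs, ← map_pow, hs, map_add, hg, hσi]; ring
      rw [h1]; linear_combination -hi
  obtain ⟨g2, hf2, hg2⟩ := step 1 (map_one σ)
  obtain ⟨g3, hf3, hg3⟩ := step g2 hf2
  obtain ⟨g4, hf4, hg4⟩ := step g3 hf3
  obtain ⟨g5, hf5, hg5⟩ := step g4 hf4
  obtain ⟨g6, hf6, hg6⟩ := step g5 hf5
  obtain ⟨g7, hf7, hg7⟩ := step g6 hf6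
  have hg7' : g7 ^ 2 = 7 := by
    rw [hg7, hg6, hg5, hg4, hg3, hg2]; norm_num
  -- valuation basics
  have ν1 : ν 1 = 0 := by
    have h := hνmul 1 1
    rw [one_mul] at h
    have hne1 : ν (1 : K) ≠ ⊤ := by simp [hν1]
    lift ν (1 : K) to ℝ using hne1 with r hr
    have : r = r + r := by exact_mod_cast h
    have : r = 0 := by linarith
    exact_mod_cast this
  have νneg1 : ν (-1 : K) = 0 := by
    have h := hνmul (-1) (-1)
    rw [neg_mul_neg, one_mul, ν1] at h
    have hne1 : ν (-1 : K) ≠ ⊤ := by simp [hν1]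
    lift ν (-1 : K) to ℝ using hne1 with r hr
    have : (0 : ℝ) = r + r := by exact_mod_cast h
    have : r = 0 := by linarith
    exact_mod_cast this
  have νneg : ∀ x : K, ν (-x) = ν x := by
    intro x
    have h := hνmul (-1) x
    rw [neg_one_mul, νneg1, zero_add] at h
    exact h
  have ν2top : ν (2 : K) ≠ ⊤ := by simp [hν1, two0]
  -- if ν x < ν y then ν (x + y) = ν x
  have hmin : ∀ x y : K, ν x < ν y → ν (x + y) = ν x := by
    intro x y hxy
    have h1 : ν x ≤ ν (x + y) := by
      have := hνadd x y
      rwa [min_eq_left hxy.le] at this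
    refine le_antisymm ?_ h1
    by_contra h
    push_neg at h
    have h2 := hνadd (x + y) (-y)
    rw [add_neg_cancel_right, νneg] at h2
    exact absurd h2 (not_le.mpr (lt_min h hxy))
  have ν8 : ν (8 : K) = ν 2 + ν 2 + ν 2 := by
    have : (8 : K) = 2 * 2 * 2 := by norm_num
    rw [this, hνmul, hνmul]
  have ν8pos : 0 < ν (8 : K) := by
    rw [ν8]
    calc (0 : WithTop ℝ) < ν 2 := hν2
    _ ≤ ν 2 + ν 2 + ν 2 := by
        nth_rewrite 1 [← add_zero (ν (2:K)), ← add_zero (ν (2:K) + 0)]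
        gcongr <;> exact hν2.le
  have ν7 : ν (7 : K) = 0 := by
    have h := hmin (-1) 8 (by rw [νneg1]; exact ν8pos)
    rw [show (-1 : K) + 8 = 7 by norm_num] at h
    rw [h, νneg1]
  have seven0 : (7 : K) ≠ 0 := by
    intro h
    rw [← hν1] at h
    rw [ν7] at h
    exact (WithTop.zero_ne_top) h
  -- square root of -7, normalized so that ν(c+1) ≤ ν(c-1)
  obtain ⟨c, hc, hord⟩ : ∃ c : K, c ^ 2 = -7 ∧ ν (c + 1) ≤ ν (c - 1) := by
    obtain ⟨c, hc⟩ := sqrt (-7)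
    rcases le_total (ν (c + 1)) (ν (c - 1)) with h | h
    · exact ⟨c, hc, h⟩
    · refine ⟨-c, by rw [neg_pow]; simpa using hc, ?_⟩
      rw [show -c + 1 = -(c - 1) by ring, show -c - 1 = -(c + 1) by ring, νneg, νneg]
      exact h
  have hsum : ν (c - 1) + ν (c + 1) = ν 2 + ν 2 + ν 2 := by
    have key : (c - 1) * (c + 1) = -(8 : K) := by linear_combination hc
    have h := hνmul (c - 1) (c + 1)
    rw [key, νneg, ν8] at h
    exact h.symm
  -- ν(c-1) > ν 2
  have hcm1top : ν (c - 1) ≠ ⊤ := by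
    intro h
    rw [h, top_add] at hsum
    exact (WithTop.add_ne_top.mpr ⟨WithTop.add_ne_top.mpr ⟨ν2top, ν2top⟩, ν2top⟩) hsum.symm
  have hcp1top : ν (c + 1) ≠ ⊤ := by
    intro h
    rw [h, add_top] at hsum
    exact (WithTop.add_ne_top.mpr ⟨WithTop.add_ne_top.mpr ⟨ν2top, ν2top⟩, ν2top⟩) hsum.symm
  have hgt : ν 2 < ν (c - 1) := by
    lift ν (c - 1) to ℝ using hcm1top with r hr
    lift ν (c + 1) to ℝ using hcp1top with s hs
    lift ν (2 : K) to ℝ using ν2top with v hv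
    have h1 : r + s = v + v + v := by exact_mod_cast hsum
    have h2 : s ≤ r := by exact_mod_cast hord
    have h3 : (0 : ℝ) < v := by exact_mod_cast hν2
    exact_mod_cast show (v : ℝ) < r by linarith
  -- ν c = 0
  have νc : ν c = 0 := by
    have h := hνmul c c
    rw [← sq] at h
    rw [hc, νneg, ν7] at h
    have hctop : ν c ≠ ⊤ := by
      intro hh
      rw [hh, top_add] at h
      exact WithTop.zero_ne_top h
    lift ν c to ℝ using hctop with r hr
    have : (0 : ℝ) = r + r := by exact_mod_cast h
    have : r = 0 := by linarith
    exact_mod_cast this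
  -- σ fixes c
  have hσc : σ c = c := by
    have h2 : (σ c - c) * (σ c + c) = 0 := by
      have : (σ c) ^ 2 = c ^ 2 := by
        rw [← map_pow, hc, map_neg, map_ofNat]
      linear_combination this
    rcases mul_eq_zero.mp h2 with h1 | h1
    · exact sub_eq_zero.mp h1
    · exfalso
      have hσcc : σ c = -c := by linear_combination h1
      -- then ν (σ c - c) = ν 2, but also ≥ ν(c-1) > ν 2
      have hval : ν (σ c - c) = ν 2 := by
        rw [hσcc, show -c - c = -(2 * c) by ring, νneg, hνmul, νc, add_zero]
      have hge : ν (c - 1) ≤ ν (σ c - c) := by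
        have h3 := hνadd (σ (c - 1)) (-(c - 1))
        rw [show σ (c - 1) + -(c - 1) = σ c - c by rw [map_sub, map_one]; ring] at h3
        rw [hiso, νneg, min_self] at h3
        exact h3
      rw [hval] at hge
      exact absurd hge (not_le.mpr hgt)
  -- final contradiction
  have hg70 : g7 ≠ 0 := by
    intro h
    rw [h] at hg7'
    exact seven0 (by simpa using hg7'.symm)
  apply hX (c / g7)
  · rw [map_div₀, hσc, hf7]
  · rw [div_pow, hc, hg7', neg_div, div_self seven0]
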